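/- Let h, k be coprime positive integers and a, b positive integers. For every point (x,y) ∈ ℂ² with x^(a(h+k)) ≠ y^(bhk), the fiber of F_{h,k,a,b} over (x,y), i.e. the set {(z,w) ∈ ℂ² : h·z^k + k·w^h = (h+k)·x^a and z·w = y^b}, is finite and has exactly h+k elements; that is, F_{h,k,a,b} has degree h+k and is unbranched outside the curve x^(a(h+k)) = y^(bhk). -/

import Mathlib

/-!
Off the curve `u ^ (h + k) = c ^ (h * k)` the fiber over `(u, c) = (x ^ a, y ^ b)` is cut out by a
single polynomial in `z` of degree `h + k` with only simple roots, so it has `h + k` points.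
When `c ≠ 0`, substituting `w = c / z` and clearing denominators gives
`P = h z^(h+k) - (h+k) u z^h + k c^h`; at a double root, `P' = 0` forces `z^k = u` and then `P = 0`
forces `c^h = u z^h`, whence `u^(h+k) = c^(hk)`. When `c = 0` the fiber splits into the `k` roots of
`h z^k = (h+k) u` on the `z`-axis and the `h` roots of `k w^h = (h+k) u` on the `w`-axis.
-/

open Polynomial

section IsAlgClosed

variable {K : Type*} [Field K] [IsAlgClosed K]

theorem Polynomial.ncard_setOf_isRoot_eq_natDegree {p : K[X]} (hp : p ≠ 0)
    (hsimple : ∀ z, p.IsRoot z → ¬ p.derivative.IsRoot z) :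
    {z | p.IsRoot z}.ncard = p.natDegree := by
  classical
  have hnodup : p.roots.Nodup := Multiset.nodup_iff_count_le_one.mpr fun z ↦ by
    rw [count_roots, ← not_lt, one_lt_rootMultiplicity_iff_isRoot hp]
    exact fun ⟨hz, hz'⟩ ↦ hsimple z hz hz'
  have hroots : {z | p.IsRoot z} = ↑p.roots.toFinset := by
    ext z; simp [mem_roots hp]
  rw [hroots, Set.ncard_coe_finset, Multiset.toFinset_card_of_nodup hnodup,
    IsAlgClosed.card_roots_eq_natDegree]

theorem ncard_setOf_mul_pow_eq {n : ℕ} {a s : K} (hn : (n : K) ≠ 0) (ha : a ≠ 0) (hs : s ≠ 0) :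
    {z | a * z ^ n = s}.ncard = n := by
  have hn0 : n ≠ 0 := by rintro rfl; exact hn Nat.cast_zero
  have hdeg : (C a * X ^ n - C s).natDegree = n := by
    compute_degree!
    simpa [hn0] using ha
  have hne : C a * X ^ n - C s ≠ 0 := by
    rintro h0; rw [h0, natDegree_zero] at hdeg; exact hn0 hdeg.symm
  have hsimple (z) (hz : (C a * X ^ n - C s).IsRoot z) :
      ¬ (C a * X ^ n - C s).derivative.IsRoot z := by
    have hz0 : z ≠ 0 := by
      rintro rfl; simp [hn0, hs] at hz
    simp [derivative_X_pow, ha, hn, hz0]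
  convert ncard_setOf_isRoot_eq_natDegree hne hsimple using 2 <;> simp [sub_eq_zero, hdeg]

end IsAlgClosed

variable {K : Type*} [Field K] {h k : ℕ} {u c : K}

/-- The fiber of `F_{h,k,1,1}` over `(u, c)`; the fiber of `F_{h,k,a,b}` over `(x, y)` is
`fiberHK h k (x ^ a) (y ^ b)`. -/
def fiberHK (h k : ℕ) (u c : K) : Set (K × K) :=
  {p | (h : K) * p.1 ^ k + (k : K) * p.2 ^ h = ((h : K) + (k : K)) * u ∧ p.1 * p.2 = c}

theorem fiberHK_zero (hh : 0 < h) (hk : 0 < k) :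
    fiberHK h k u 0 = (fun z ↦ (z, 0)) '' {z | (h : K) * z ^ k = ((h : K) + k) * u} ∪
      (fun w ↦ (0, w)) '' {w | (k : K) * w ^ h = ((h : K) + k) * u} := by
  ext ⟨z, w⟩
  simp only [fiberHK, mul_eq_zero, Set.mem_ofPred_eq, Set.mem_union, Set.mem_image,
    Prod.mk.injEq]
  constructor
  · rintro ⟨heq, rfl | rfl⟩
    · right; exact ⟨w, by simpa [hk.ne'] using heq, rfl, rfl⟩
    · left; exact ⟨z, by simpa [hh.ne'] using heq, rfl, rfl⟩
  · rintro (⟨z, hz, rfl, rfl⟩ | ⟨w, hw, rfl, rfl⟩)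
    · simpa [hh.ne'] using hz
    · simpa [hk.ne'] using hw

/-- Clearing the denominator of `h z^k + k (c / z)^h = (h + k) u`. -/
noncomputable def fiberPoly (h k : ℕ) (u c : K) : K[X] :=
  C (h : K) * X ^ (h + k) - C (((h : K) + k) * u) * X ^ h + C (k * c ^ h)

theorem eval_fiberPoly (z : K) :
    (fiberPoly h k u c).eval z = h * z ^ (h + k) - ((h : K) + k) * u * z ^ h + k * c ^ h := by
  simp [fiberPoly]

theorem mul_eval_derivative_fiberPoly (hh : 0 < h) (z : K) :
    z * (derivative (fiberPoly h k u c)).eval z =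
      h * z ^ h * (((h : K) + k) * z ^ k - ((h : K) + k) * u) := by
  obtain ⟨n, rfl⟩ : ∃ n, h = n + 1 := ⟨h - 1, by omega⟩
  simp [fiberPoly, derivative_X_pow, -map_mul, -map_pow, show n + 1 + k - 1 = n + k by omega]
  ring

section CharZero

variable [CharZero K]

theorem natDegree_fiberPoly (hh : 0 < h) (hk : 0 < k) :
    (fiberPoly h k u c).natDegree = h + k := by
  unfold fiberPoly
  compute_degree!
  simp [hh.ne', hk.ne']

theorem fiberPoly_ne_zero (hh : 0 < h) (hk : 0 < k) : fiberPoly h k u c ≠ 0 := by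
  intro h0
  have := natDegree_fiberPoly (u := u) (c := c) hh hk
  rw [h0, natDegree_zero] at this
  omega

theorem ne_zero_of_isRoot_fiberPoly (hh : 0 < h) (hk : 0 < k) (hc : c ≠ 0) {z : K}
    (hz : (fiberPoly h k u c).IsRoot z) : z ≠ 0 := by
  rintro rfl
  simp [IsRoot, eval_fiberPoly, hh.ne', hk.ne', hc] at hz

theorem fiberHK_eq_image (hh : 0 < h) (hk : 0 < k) (hc : c ≠ 0) :
    fiberHK h k u c = (fun z ↦ (z, c / z)) '' {z | (fiberPoly h k u c).IsRoot z} := by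
  ext ⟨z, w⟩
  simp only [fiberHK, Set.mem_image, Set.mem_ofPred_eq, Prod.mk.injEq]
  constructor
  · rintro ⟨heq, rfl⟩
    have hz : z ≠ 0 := left_ne_zero_of_mul hc
    refine ⟨z, ?_, rfl, by field_simp⟩
    rw [IsRoot.def, eval_fiberPoly]
    linear_combination (z ^ h) * heq
  · rintro ⟨z, hz, rfl, rfl⟩
    have hz0 := ne_zero_of_isRoot_fiberPoly hh hk hc hz
    rw [IsRoot.def, eval_fiberPoly] at hz
    refine ⟨?_, by field_simp⟩
    rw [div_pow]
    field_simp
    linear_combination hz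

theorem not_isRoot_derivative_fiberPoly (hh : 0 < h) (hk : 0 < k) (hc : c ≠ 0)
    (hxy : u ^ (h + k) ≠ c ^ (h * k)) {z : K} (hz : (fiberPoly h k u c).IsRoot z) :
    ¬ (derivative (fiberPoly h k u c)).IsRoot z := by
  intro hz'
  have hz0 := ne_zero_of_isRoot_fiberPoly hh hk hc hz
  have hhk : (h : K) + k ≠ 0 := by exact_mod_cast (by omega : h + k ≠ 0)
  have hzk : z ^ k = u := by
    have := mul_eval_derivative_fiberPoly (u := u) (c := c) (k := k) hh z
    rw [hz'.eq_zero, mul_zero, eq_comm] at this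
    simpa [hh.ne', hz0, sub_eq_zero, hhk] using this
  have hch : c ^ h = u * z ^ h := by
    rw [IsRoot.def, eval_fiberPoly, pow_add, hzk] at hz
    apply mul_left_cancel₀ (show (k : K) ≠ 0 by exact_mod_cast hk.ne')
    linear_combination hz
  apply hxy
  rw [pow_mul, hch, mul_pow, ← pow_mul, mul_comm h k, pow_mul, hzk, ← pow_add, add_comm]

variable [IsAlgClosed K]

theorem ncard_fiberHK_zero (hh : 0 < h) (hk : 0 < k) (hu : u ≠ 0) :
    (fiberHK h k u 0).ncard = h + k := by
  have hs : ((h : K) + k) * u ≠ 0 := mul_ne_zero (by exact_mod_cast (by omega : h + k ≠ 0)) hu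
  have hfinite {n : ℕ} {a : K} (hn : 0 < n) (ha : a ≠ 0) :
      {z | a * z ^ n = ((h : K) + k) * u}.Finite :=
    Set.finite_of_ncard_ne_zero <| by
      rw [ncard_setOf_mul_pow_eq (by exact_mod_cast hn.ne') ha hs]; exact hn.ne'
  have hdisj : Disjoint ((fun z ↦ (z, (0 : K))) '' {z | (h : K) * z ^ k = ((h : K) + k) * u})
      ((fun w ↦ ((0 : K), w)) '' {w | (k : K) * w ^ h = ((h : K) + k) * u}) := by
    rw [Set.disjoint_left]
    rintro _ ⟨z, hz, rfl⟩ ⟨w, -, hw⟩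
    obtain rfl : 0 = z := congrArg Prod.fst hw
    simp [hk.ne', eq_comm, hs] at hz
  rw [fiberHK_zero hh hk,
    Set.ncard_union_eq hdisj ((hfinite hk (by exact_mod_cast hh.ne')).image _)
      ((hfinite hh (by exact_mod_cast hk.ne')).image _),
    Set.ncard_image_of_injective _ fun _ _ ↦ congrArg Prod.fst,
    Set.ncard_image_of_injective _ fun _ _ ↦ congrArg Prod.snd,
    ncard_setOf_mul_pow_eq (by exact_mod_cast hk.ne') (by exact_mod_cast hh.ne') hs,
    ncard_setOf_mul_pow_eq (by exact_mod_cast hh.ne') (by exact_mod_cast hk.ne') hs, add_comm]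

theorem ncard_fiberHK_of_ne_zero (hh : 0 < h) (hk : 0 < k) (hc : c ≠ 0)
    (hxy : u ^ (h + k) ≠ c ^ (h * k)) : (fiberHK h k u c).ncard = h + k := by
  rw [fiberHK_eq_image hh hk hc, Set.ncard_image_of_injective _ fun _ _ ↦ congrArg Prod.fst,
    ncard_setOf_isRoot_eq_natDegree (fiberPoly_ne_zero hh hk)
      fun _ ↦ not_isRoot_derivative_fiberPoly hh hk hc hxy,
    natDegree_fiberPoly hh hk]

theorem ncard_fiberHK (hh : 0 < h) (hk : 0 < k) (hxy : u ^ (h + k) ≠ c ^ (h * k)) :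
    (fiberHK h k u c).ncard = h + k := by
  rcases eq_or_ne c 0 with rfl | hc
  · refine ncard_fiberHK_zero hh hk fun hu ↦ hxy ?_
    rw [hu, zero_pow (by omega), zero_pow (Nat.mul_ne_zero hh.ne' hk.ne')]
  · exact ncard_fiberHK_of_ne_zero hh hk hc hxy

end CharZero

theorem stmt_4_general (h k a b : ℕ) (hh : 0 < h) (hk : 0 < k)
    (x y : ℂ) (hxy : x ^ (a * (h + k)) ≠ y ^ (b * (h * k))) :
    {p : ℂ × ℂ | (h : ℂ) * p.1 ^ k + (k : ℂ) * p.2 ^ h = ((h : ℂ) + (k : ℂ)) * x ^ a ∧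
        p.1 * p.2 = y ^ b}.Finite ∧
    {p : ℂ × ℂ | (h : ℂ) * p.1 ^ k + (k : ℂ) * p.2 ^ h = ((h : ℂ) + (k : ℂ)) * x ^ a ∧
        p.1 * p.2 = y ^ b}.ncard = h + k := by
  rw [pow_mul, pow_mul] at hxy
  have hcard : (fiberHK h k (x ^ a) (y ^ b)).ncard = h + k := ncard_fiberHK hh hk hxy
  exact ⟨Set.finite_of_ncard_ne_zero (hcard.trans_ne (by omega)), hcard⟩

/-- For coprime positive integers `h, k` and positive integers `a, b`, the fiber
of `F_{h,k,a,b} : S_{h,k,a,b} → ℂ²` over a point `(x, y)` off the curve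
`x^(a(h+k)) = y^(bhk)` is finite with exactly `h + k` elements: the cover has
degree `h + k` and is unbranched outside that curve. -/
theorem stmt_4 (h k a b : ℕ) (hh : 0 < h) (hk : 0 < k) (hcop : Nat.Coprime h k)
    (ha : 0 < a) (hb : 0 < b)
    (x y : ℂ) (hxy : x ^ (a * (h + k)) ≠ y ^ (b * (h * k))) :
    {p : ℂ × ℂ | (h : ℂ) * p.1 ^ k + (k : ℂ) * p.2 ^ h = ((h : ℂ) + (k : ℂ)) * x ^ a ∧
        p.1 * p.2 = y ^ b}.Finite ∧
    {p : ℂ × ℂ | (h : ℂ) * p.1 ^ k + (k : ℂ) * p.2 ^ h = ((h : ℂ) + (k : ℂ)) * x ^ a ∧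
        p.1 * p.2 = y ^ b}.ncard = h + k :=
  stmt_4_general h k a b hh hk x y hxy
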